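/- arXiv:2008.04587 — 2 statements merged into one kernel-verified Lean document; each statement's English description precedes it below -/
import Mathlib

section
/- Every crown of a graph G is contained in a crown of maximum cardinality. -/
open Finset

variable {V : Type*}

namespace CrownPaper

variable [Fintype V] [DecidableEq V]

/-- The (open) neighborhood of a finite set of vertices. -/
def nbrs (G : SimpleGraph V) [DecidableRel G.Adj] (A : Finset V) : Finset V :=
  univ.filter (fun v => ∃ a ∈ A, G.Adj v a)

/-- The closed neighborhood `N[A] = A ∪ N(A)`. -/
def closedNbrs (G : SimpleGraph V) [DecidableRel G.Adj] (A : Finset V) : Finset V :=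
  A ∪ nbrs G A

/-- `S` is an independent set of `G`. -/
def IsIndep (G : SimpleGraph V) (S : Finset V) : Prop :=
  ∀ a ∈ S, ∀ b ∈ S, ¬ G.Adj a b

/-- The difference `d(S) = |S| - |N(S)|`. -/
def diff (G : SimpleGraph V) [DecidableRel G.Adj] (S : Finset V) : ℤ :=
  (S.card : ℤ) - ((nbrs G S).card : ℤ)

/-- `S` is a critical independent set. -/
def IsCritIndep (G : SimpleGraph V) [DecidableRel G.Adj] (S : Finset V) : Prop :=
  IsIndep G S ∧ ∀ I : Finset V, IsIndep G I → diff G I ≤ diff G S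

/-- `S` is a crown: an independent set with a matching from `N(S)` into `S`. -/
def IsCrown (G : SimpleGraph V) [DecidableRel G.Adj] (S : Finset V) : Prop :=
  IsIndep G S ∧ ∃ f : V → V, (∀ v ∈ nbrs G S, f v ∈ S ∧ G.Adj v (f v)) ∧
    Set.InjOn f (nbrs G S : Set V)

/-- `S` is a local maximum independent set: a maximum independent set of `G[N[S]]`. -/
def IsLocalMaxIndep (G : SimpleGraph V) [DecidableRel G.Adj] (S : Finset V) : Prop :=
  IsIndep G S ∧ ∀ I : Finset V, IsIndep G I → I ⊆ closedNbrs G S → I.card ≤ S.card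

/-- The independence number. -/
noncomputable def alpha (G : SimpleGraph V) : ℕ :=
  sSup {n | ∃ S : Finset V, IsIndep G S ∧ S.card = n}

/-- `M` is a matching of `G`, given as a finite set of (ordered) edges. -/
def IsMatching (G : SimpleGraph V) (M : Finset (V × V)) : Prop :=
  (∀ e ∈ M, G.Adj e.1 e.2) ∧
  ∀ e ∈ M, ∀ e' ∈ M, e ≠ e' →
    e.1 ≠ e'.1 ∧ e.1 ≠ e'.2 ∧ e.2 ≠ e'.1 ∧ e.2 ≠ e'.2

/-- The matching number. -/
noncomputable def mu (G : SimpleGraph V) : ℕ :=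
  sSup {n | ∃ M : Finset (V × V), IsMatching G M ∧ M.card = n}

/-- `G` has a perfect matching. -/
def HasPerfectMatching (G : SimpleGraph V) : Prop :=
  ∃ M : Finset (V × V), IsMatching G M ∧ ∀ v : V, ∃ e ∈ M, v = e.1 ∨ v = e.2

/-- `G` is a König–Egerváry graph: `α(G) + μ(G) = |V(G)|`. -/
def IsKonigEgervary (G : SimpleGraph V) : Prop :=
  alpha G + mu G = Fintype.card V

/-- `G` is bipartite. -/
def IsBipartite (G : SimpleGraph V) : Prop :=
  ∃ X : Set V, ∀ a b : V, G.Adj a b → (a ∈ X ↔ b ∉ X)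

end CrownPaper

open CrownPaper

/-!
For crowns `S` and `T`, the set `S ∪ (T \ N[S])` is again a crown. The matching of `N(S)` into `S`
is kept, and the new neighbours `N(T \ N[S]) \ N(S)` satisfy Hall's condition into `T \ N[S]`:
for such a set `X`, the matching of `N(T)` into `T` applied to `X` together with the partners of
`T ∩ N(S)` in `S` shows `|X| ≤ |N(X) ∩ (T \ N[S])|`. This crown has at least `|T|` vertices, as
`T ∩ N(S)` is matched into `S \ T`. So a largest crown containing `S` is a maximum crown.
-/

namespace CrownPaper

def MatchesInto (G : SimpleGraph V) (A B : Finset V) : Prop :=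
  ∃ f : V → V, (∀ v ∈ A, f v ∈ B ∧ G.Adj v (f v)) ∧ Set.InjOn f A

variable {G : SimpleGraph V}

lemma MatchesInto.card_le {A B : Finset V} (h : MatchesInto G A B) : A.card ≤ B.card := by
  obtain ⟨f, hf, hinj⟩ := h
  exact card_le_card_of_injOn f (fun v hv => (hf v hv).1) hinj

lemma MatchesInto.union [DecidableEq V] {A A' B B' : Finset V} (h : MatchesInto G A B)
    (h' : MatchesInto G A' B') (hB : Disjoint B B') : MatchesInto G (A ∪ A') (B ∪ B') := by
  obtain ⟨f, hf, hinj⟩ := h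
  obtain ⟨f', hf', hinj'⟩ := h'
  refine ⟨fun v => if v ∈ A then f v else f' v, fun v hv => ?_, fun u hu v hv huv => ?_⟩
  · by_cases hvA : v ∈ A
    · simp only [hvA, if_true, mem_union]
      exact ⟨Or.inl (hf v hvA).1, (hf v hvA).2⟩
    · obtain ⟨hfB, hadj⟩ := hf' v ((mem_union.1 hv).resolve_left hvA)
      simp only [hvA, if_false, mem_union]
      exact ⟨Or.inr hfB, hadj⟩
  · simp only [coe_union, Set.mem_union, mem_coe] at hu hv
    by_cases huA : u ∈ A <;> by_cases hvA : v ∈ A <;> simp only [huA, hvA, if_true, if_false] at huv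
    · exact hinj huA hvA huv
    · exact (disjoint_left.1 hB (hf u huA).1 (huv ▸ (hf' v (hv.resolve_left hvA)).1)).elim
    · exact (disjoint_left.1 hB (hf v hvA).1 (huv ▸ (hf' u (hu.resolve_left huA)).1)).elim
    · exact hinj' (hu.resolve_left huA) (hv.resolve_left hvA) huv

variable [Fintype V] [DecidableRel G.Adj]

@[simp]
lemma mem_nbrs {A : Finset V} {v : V} : v ∈ nbrs G A ↔ ∃ a ∈ A, G.Adj v a := by
  simp [nbrs]

lemma nbrs_mono {A B : Finset V} (h : A ⊆ B) : nbrs G A ⊆ nbrs G B := by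
  intro v hv
  obtain ⟨a, ha, hva⟩ := mem_nbrs.1 hv
  exact mem_nbrs.2 ⟨a, h ha, hva⟩

lemma nbrs_union [DecidableEq V] (A B : Finset V) : nbrs G (A ∪ B) = nbrs G A ∪ nbrs G B := by
  ext v
  simp only [mem_nbrs, mem_union, or_and_right, exists_or]

lemma IsIndep.disjoint_nbrs {S : Finset V} (hS : IsIndep G S) : Disjoint (nbrs G S) S := by
  refine disjoint_left.2 fun v hv hvS => ?_
  obtain ⟨a, ha, hva⟩ := mem_nbrs.1 hv
  exact hS v hvS a ha hva

lemma MatchesInto.restrict [DecidableEq V] {A B X : Finset V} (h : MatchesInto G A B)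
    (hX : X ⊆ A) : MatchesInto G X (B ∩ nbrs G X) := by
  obtain ⟨f, hf, hinj⟩ := h
  refine ⟨f, fun v hv => ?_, hinj.mono (coe_subset.2 hX)⟩
  have ⟨hfB, hadj⟩ := hf v (hX hv)
  exact ⟨mem_inter.2 ⟨hfB, mem_nbrs.2 ⟨v, hv, hadj.symm⟩⟩, hadj⟩

lemma matchesInto_of_forall_card_le [DecidableEq V] {A B : Finset V}
    (hall : ∀ X ⊆ A, X.card ≤ (B ∩ nbrs G X).card) : MatchesInto G A B := by
  have hall' (X : Finset A) : X.card ≤ #{b | ∃ a ∈ X, b ∈ B ∧ G.Adj a b} := by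
    have hX : X.map (Function.Embedding.subtype _) ⊆ A := fun _ hx =>
      X.property_of_mem_map_subtype hx
    calc X.card = (X.map (Function.Embedding.subtype _)).card := (card_map _).symm
      _ ≤ (B ∩ nbrs G (X.map (Function.Embedding.subtype _))).card := hall _ hX
      _ = #{b | ∃ a ∈ X, b ∈ B ∧ G.Adj a b} := by
        congr 1
        ext b
        simp only [mem_filter, mem_univ, true_and, mem_inter, mem_nbrs, mem_map,
          Function.Embedding.coe_subtype, Subtype.exists, exists_and_right, exists_eq_right]
        constructor
        · rintro ⟨hb, a, ha, hba⟩
          exact ⟨a, ha, hb, hba.symm⟩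
        · rintro ⟨a, ha, hb, hab⟩
          exact ⟨hb, a, ha, hab.symm⟩
  obtain ⟨g, hginj, hg⟩ := (Fintype.all_card_le_filter_rel_iff_exists_injective _).1 hall'
  refine ⟨fun v => if hv : v ∈ A then g ⟨v, hv⟩ else v, fun v hv => ?_, fun u hu v hv huv => ?_⟩
  · simpa only [dif_pos hv] using hg ⟨v, hv⟩
  · simp only [mem_coe] at hu hv
    exact congrArg Subtype.val (hginj (by simpa [hu, hv] using huv))

variable [DecidableEq V]

lemma IsIndep.union_sdiff_closedNbrs {S T : Finset V} (hS : IsIndep G S) (hT : IsIndep G T) :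
    IsIndep G (S ∪ (T \ closedNbrs G S)) := by
  have hR : ∀ b ∈ T \ closedNbrs G S, ∀ a ∈ S, ¬ G.Adj a b := fun b hb a ha hab =>
    (mem_sdiff.1 hb).2 (mem_union_right _ (mem_nbrs.2 ⟨a, ha, hab.symm⟩))
  intro a ha b hb hab
  rcases mem_union.1 ha with haS | haR <;> rcases mem_union.1 hb with hbS | hbR
  · exact hS a haS b hbS hab
  · exact hR b hbR a haS hab
  · exact hR a haR b hbS hab.symm
  · exact hT a (mem_sdiff.1 haR).1 b (mem_sdiff.1 hbR).1 hab

lemma card_le_card_sdiff_closedNbrs_inter_nbrs {S T X : Finset V}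
    (hS : MatchesInto G (nbrs G S) S) (hT : MatchesInto G (nbrs G T) T)
    (hXT : X ⊆ nbrs G T) (hXS : Disjoint X (closedNbrs G S)) :
    X.card ≤ ((T \ closedNbrs G S) ∩ nbrs G X).card := by
  obtain ⟨f, hf, hfinj⟩ := hS
  -- `Y`, the partners of `T ∩ N(S)` in `S`, lies in `N(T)` and pads `X` before matching into `T`.
  set Y := (T ∩ nbrs G S).image f
  have hYS : Y ⊆ S := fun y hy => by
    obtain ⟨t, ht, rfl⟩ := mem_image.1 hy
    exact (hf t (mem_inter.1 ht).2).1
  have hYcard : Y.card = (T ∩ nbrs G S).card :=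
    card_image_of_injOn (hfinj.mono (coe_subset.2 inter_subset_right))
  have hXY : Disjoint X Y := hXS.mono_right (hYS.trans subset_union_left)
  have hXYT : X ∪ Y ⊆ nbrs G T := union_subset hXT fun y hy => by
    obtain ⟨t, ht, rfl⟩ := mem_image.1 hy
    exact mem_nbrs.2 ⟨t, (mem_inter.1 ht).1, (hf t (mem_inter.1 ht).2).2.symm⟩
  have hcover : T ∩ nbrs G (X ∪ Y) ⊆ (T ∩ nbrs G S) ∪ ((T \ closedNbrs G S) ∩ nbrs G X) := by
    intro t ht
    obtain ⟨htT, htN⟩ := mem_inter.1 ht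
    obtain ⟨a, ha, hta⟩ := mem_nbrs.1 htN
    by_cases htNS : t ∈ nbrs G S
    · exact mem_union_left _ (mem_inter.2 ⟨htT, htNS⟩)
    have haX : a ∈ X :=
      (mem_union.1 ha).resolve_right fun haY => htNS (mem_nbrs.2 ⟨a, hYS haY, hta⟩)
    have htS : t ∉ S := fun htS =>
      disjoint_left.1 hXS haX (mem_union_right _ (mem_nbrs.2 ⟨t, htS, hta.symm⟩))
    have htR : t ∈ T \ closedNbrs G S := mem_sdiff.2 ⟨htT, by simp [closedNbrs, htS, htNS]⟩
    exact mem_union_right _ (mem_inter.2 ⟨htR, mem_nbrs.2 ⟨a, haX, hta⟩⟩)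
  have hcount : X.card + (T ∩ nbrs G S).card ≤
      (T ∩ nbrs G S).card + ((T \ closedNbrs G S) ∩ nbrs G X).card :=
    calc X.card + (T ∩ nbrs G S).card = (X ∪ Y).card := by
          rw [card_union_of_disjoint hXY, hYcard]
      _ ≤ (T ∩ nbrs G (X ∪ Y)).card := (hT.restrict hXYT).card_le
      _ ≤ _ := (card_le_card hcover).trans (card_union_le _ _)
  omega

lemma IsCrown.union_sdiff_closedNbrs {S T : Finset V} (hS : IsCrown G S) (hT : IsCrown G T) :
    IsCrown G (S ∪ (T \ closedNbrs G S)) := by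
  set R := T \ closedNbrs G S
  have hSR : Disjoint S R := disjoint_sdiff.mono_left subset_union_left
  have hR : MatchesInto G (nbrs G R \ nbrs G S) R := by
    refine matchesInto_of_forall_card_le fun X hX => ?_
    refine card_le_card_sdiff_closedNbrs_inter_nbrs hS.2 hT.2
      (hX.trans (sdiff_subset.trans (nbrs_mono sdiff_subset))) (disjoint_left.2 fun x hxX hx => ?_)
    obtain ⟨hxR, hxNS⟩ := mem_sdiff.1 (hX hxX)
    obtain ⟨r, hr, hxr⟩ := mem_nbrs.1 hxR
    rcases mem_union.1 hx with hxS | hxNS'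
    · exact (mem_sdiff.1 hr).2 (mem_union_right _ (mem_nbrs.2 ⟨x, hxS, hxr.symm⟩))
    · exact hxNS hxNS'
  refine ⟨hS.1.union_sdiff_closedNbrs hT.1, ?_⟩
  rw [nbrs_union, ← union_sdiff_self_eq_union]
  exact MatchesInto.union hS.2 hR hSR

lemma card_le_card_union_sdiff_closedNbrs {S T : Finset V} (hS : MatchesInto G (nbrs G S) S)
    (hT : IsIndep G T) : T.card ≤ (S ∪ (T \ closedNbrs G S)).card := by
  have hTNS : (T ∩ nbrs G S).card ≤ (S \ T).card := by
    refine (hS.restrict inter_subset_right).card_le.trans (card_le_card fun v hv => ?_)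
    obtain ⟨hvS, hvN⟩ := mem_inter.1 hv
    exact mem_sdiff.2 ⟨hvS, disjoint_left.1 hT.disjoint_nbrs (nbrs_mono inter_subset_left hvN)⟩
  have hTcN : (T ∩ closedNbrs G S).card ≤ (S ∩ T).card + (T ∩ nbrs G S).card := by
    rw [closedNbrs, inter_union_distrib_left, inter_comm T S]
    exact card_union_le _ _
  have hSR : Disjoint S (T \ closedNbrs G S) := disjoint_sdiff.mono_left subset_union_left
  have := card_inter_add_card_sdiff T (closedNbrs G S)
  have := card_inter_add_card_sdiff S T
  rw [card_union_of_disjoint hSR]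
  omega

end CrownPaper

theorem crown_subset_maximum_crown (G : SimpleGraph V) [Fintype V] [DecidableEq V]
    [DecidableRel G.Adj] (S : Finset V) (hS : IsCrown G S) :
    ∃ B : Finset V, IsCrown G B ∧ S ⊆ B ∧ ∀ C : Finset V, IsCrown G C → C.card ≤ B.card := by
  classical
  set crownsAbove : Finset (Finset V) := {B | IsCrown G B ∧ S ⊆ B}
  obtain ⟨B, hB, hBmax⟩ := exists_max_image crownsAbove card ⟨S, by simp [crownsAbove, hS]⟩
  obtain ⟨hBcrown, hSB⟩ := (mem_filter.1 hB).2
  refine ⟨B, hBcrown, hSB, fun C hC => ?_⟩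
  have hB' : B ∪ (C \ closedNbrs G B) ∈ crownsAbove :=
    mem_filter.2 ⟨mem_univ _, hBcrown.union_sdiff_closedNbrs hC, hSB.trans subset_union_left⟩
  exact (card_le_card_union_sdiff_closedNbrs hBcrown.2 hC.1).trans (hBmax _ hB')
end

section
/- If G is a bipartite graph, then every local maximum independent set of G is a crown (and conversely), i.e., Crown(G) = Ψ(G). -/
open Finset

variable {V : Type*}

open CrownPaper

section Aux

variable [Fintype V] [DecidableEq V] (G : SimpleGraph V) [DecidableRel G.Adj]

lemma mem_nbrs_iff {A : Finset V} {v : V} :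
    v ∈ nbrs G A ↔ ∃ a ∈ A, G.Adj v a := by
  simp [nbrs]

lemma indep_bound {S B : Finset V} (hS : IsLocalMaxIndep G S)
    (hB : B ⊆ nbrs G S) (hBind : IsIndep G B) :
    B.card ≤ (S.filter fun s => ∃ v ∈ B, G.Adj v s).card := by
  classical
  obtain ⟨hSind, hmax⟩ := hS
  set T := S.filter fun s => ∃ v ∈ B, G.Adj v s with hT
  have hBS : ∀ v ∈ B, v ∉ S := by
    intro v hv hvS
    obtain ⟨a, ha, hadj⟩ := (mem_nbrs_iff G).mp (hB hv)
    exact hSind v hvS a ha hadj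
  have hIind : IsIndep G ((S \ T) ∪ B) := by
    intro a ha b hb hab
    rcases Finset.mem_union.mp ha with ha' | ha' <;>
      rcases Finset.mem_union.mp hb with hb' | hb'
    · exact hSind a (Finset.mem_sdiff.mp ha').1 b (Finset.mem_sdiff.mp hb').1 hab
    · exact (Finset.mem_sdiff.mp ha').2
        (Finset.mem_filter.mpr ⟨(Finset.mem_sdiff.mp ha').1, b, hb', hab.symm⟩)
    · exact (Finset.mem_sdiff.mp hb').2
        (Finset.mem_filter.mpr ⟨(Finset.mem_sdiff.mp hb').1, a, ha', hab⟩)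
    · exact hBind a ha' b hb' hab
  have hIsub : (S \ T) ∪ B ⊆ closedNbrs G S := by
    intro v hv
    rcases Finset.mem_union.mp hv with hv' | hv'
    · exact Finset.mem_union_left _ (Finset.mem_sdiff.mp hv').1
    · exact Finset.mem_union_right _ (hB hv')
  have hle := hmax _ hIind hIsub
  have hdisj : Disjoint (S \ T) B := by
    rw [Finset.disjoint_right]
    intro v hv hv'
    exact hBS v hv (Finset.mem_sdiff.mp hv').1
  rw [Finset.card_union_of_disjoint hdisj, Finset.card_sdiff_of_subset (Finset.filter_subset _ _)] at hle
  have hTS : T.card ≤ S.card := Finset.card_le_card (Finset.filter_subset _ _)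
  rw [← hT] at hle
  show B.card ≤ T.card
  omega

lemma bip_bound {S B : Finset V} {X : Set V}
    (hX : ∀ a b : V, G.Adj a b → (a ∈ X ↔ b ∉ X))
    (hS : IsLocalMaxIndep G S) (hB : B ⊆ nbrs G S) :
    B.card ≤ (S.filter fun s => ∃ v ∈ B, G.Adj v s).card := by
  classical
  set B₁ := B.filter fun v => v ∈ X with hB₁
  set B₂ := B.filter fun v => v ∉ X with hB₂
  have hB₁ind : IsIndep G B₁ := by
    intro a ha b hb hab
    exact ((hX a b hab).mp (Finset.mem_filter.mp ha).2) (Finset.mem_filter.mp hb).2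
  have hB₂ind : IsIndep G B₂ := by
    intro a ha b hb hab
    exact (Finset.mem_filter.mp ha).2 ((hX a b hab).mpr (Finset.mem_filter.mp hb).2)
  have h1 := indep_bound G hS ((Finset.filter_subset _ _).trans hB) hB₁ind
  have h2 := indep_bound G hS ((Finset.filter_subset _ _).trans hB) hB₂ind
  have hdisj : Disjoint (S.filter fun s => ∃ v ∈ B₁, G.Adj v s)
      (S.filter fun s => ∃ v ∈ B₂, G.Adj v s) := by
    rw [Finset.disjoint_left]
    intro s hs hs'
    obtain ⟨-, v₁, hv₁, hadj₁⟩ := Finset.mem_filter.mp hs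
    obtain ⟨-, v₂, hv₂, hadj₂⟩ := Finset.mem_filter.mp hs'
    have hs1 : s ∉ X := (hX v₁ s hadj₁).mp (Finset.mem_filter.mp hv₁).2
    have hs2 : s ∈ X := by
      by_contra h
      exact (Finset.mem_filter.mp hv₂).2 ((hX v₂ s hadj₂).mpr h)
    exact hs1 hs2
  have hsub : (S.filter fun s => ∃ v ∈ B₁, G.Adj v s) ∪
      (S.filter fun s => ∃ v ∈ B₂, G.Adj v s) ⊆
      S.filter fun s => ∃ v ∈ B, G.Adj v s := by
    intro s hs
    rcases Finset.mem_union.mp hs with hs' | hs' <;>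
      obtain ⟨hsS, v, hv, hadj⟩ := Finset.mem_filter.mp hs' <;>
      exact Finset.mem_filter.mpr ⟨hsS, v, Finset.filter_subset _ _ hv, hadj⟩
  calc B.card = B₁.card + B₂.card :=
        (Finset.card_filter_add_card_filter_not _).symm
    _ ≤ (S.filter fun s => ∃ v ∈ B₁, G.Adj v s).card
        + (S.filter fun s => ∃ v ∈ B₂, G.Adj v s).card := Nat.add_le_add h1 h2
    _ = ((S.filter fun s => ∃ v ∈ B₁, G.Adj v s) ∪
        (S.filter fun s => ∃ v ∈ B₂, G.Adj v s)).card :=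
        (Finset.card_union_of_disjoint hdisj).symm
    _ ≤ _ := Finset.card_le_card hsub

end Aux


theorem bipartite_crown_eq_psi (G : SimpleGraph V) [Fintype V] [DecidableEq V]
    [DecidableRel G.Adj] (hG : IsBipartite G) :
    ∀ S : Finset V, IsCrown G S ↔ IsLocalMaxIndep G S := by
  classical
  obtain ⟨X, hX⟩ := hG
  intro S
  constructor
  · rintro ⟨hSind, f, hf, hinj⟩
    refine ⟨hSind, fun I hI hIsub => ?_⟩
    set g : V → V := fun v => if v ∈ S then v else f v with hg
    have hgS : ∀ v ∈ I, g v ∈ S := by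
      intro v hv
      by_cases h : v ∈ S
      · simp [hg, h]
      · have hvn : v ∈ nbrs G S := by
          rcases Finset.mem_union.mp (hIsub hv) with h' | h'
          · exact absurd h' h
          · exact h'
        simp only [hg, if_neg h]
        exact (hf v hvn).1
    have hginj : Set.InjOn g I := by
      intro u hu v hv huv
      by_cases hus : u ∈ S <;> by_cases hvs : v ∈ S
      · simpa [hg, hus, hvs] using huv
      · have hvn : v ∈ nbrs G S := by
          rcases Finset.mem_union.mp (hIsub hv) with h' | h'
          · exact absurd h' hvs
          · exact h'
        simp only [hg, if_pos hus, if_neg hvs] at huv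
        have hadj := (hf v hvn).2
        rw [← huv] at hadj
        exact absurd hadj (hI v hv u hu)
      · have hun : u ∈ nbrs G S := by
          rcases Finset.mem_union.mp (hIsub hu) with h' | h'
          · exact absurd h' hus
          · exact h'
        simp only [hg, if_neg hus, if_pos hvs] at huv
        have hadj := (hf u hun).2
        rw [huv] at hadj
        exact absurd hadj (hI u hu v hv)
      · have hun : u ∈ nbrs G S := by
          rcases Finset.mem_union.mp (hIsub hu) with h' | h'
          · exact absurd h' hus
          · exact h'
        have hvn : v ∈ nbrs G S := by
          rcases Finset.mem_union.mp (hIsub hv) with h' | h'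
          · exact absurd h' hvs
          · exact h'
        simp only [hg, if_neg hus, if_neg hvs] at huv
        exact hinj hun hvn huv
    exact Finset.card_le_card_of_injOn g hgS hginj
  · intro hS
    obtain ⟨hSind, hmax⟩ := hS
    refine ⟨hSind, ?_⟩
    set t : {v : V // v ∈ nbrs G S} → Finset V := fun v => S.filter fun s => G.Adj v.1 s with ht
    have hall : ∀ A : Finset {v : V // v ∈ nbrs G S}, A.card ≤ (A.biUnion t).card := by
      intro A
      have h1 : A.card = (A.image Subtype.val).card :=
        (Finset.card_image_of_injective _ Subtype.val_injective).symm
      have h2 : (A.image Subtype.val) ⊆ nbrs G S := by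
        intro v hv
        obtain ⟨x, hx, rfl⟩ := Finset.mem_image.mp hv
        exact x.2
      have h3 := bip_bound G hX ⟨hSind, hmax⟩ h2
      have h4 : (S.filter fun s => ∃ v ∈ A.image Subtype.val, G.Adj v s) ⊆ A.biUnion t := by
        intro s hs
        obtain ⟨hsS, v, hv, hadj⟩ := Finset.mem_filter.mp hs
        obtain ⟨x, hx, rfl⟩ := Finset.mem_image.mp hv
        exact Finset.mem_biUnion.mpr ⟨x, hx, Finset.mem_filter.mpr ⟨hsS, hadj⟩⟩
      calc A.card = (A.image Subtype.val).card := h1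
        _ ≤ _ := h3
        _ ≤ _ := Finset.card_le_card h4
    obtain ⟨f₀, hf₀inj, hf₀⟩ := (Finset.all_card_le_biUnion_card_iff_exists_injective t).mp hall
    refine ⟨fun v => if h : v ∈ nbrs G S then f₀ ⟨v, h⟩ else v, ?_, ?_⟩
    · intro v hv
      have := hf₀ ⟨v, hv⟩
      rw [ht] at this
      simp only [Finset.mem_filter] at this
      simp only [dif_pos hv]
      exact this
    · intro u hu v hv huv
      have hu' : u ∈ nbrs G S := hu
      have hv' : v ∈ nbrs G S := hv
      simp only [dif_pos hu', dif_pos hv'] at huv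
      exact congrArg Subtype.val (hf₀inj huv)
end
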